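/- arXiv:2305.19651 — 2 statements merged into one kernel-verified Lean document; each statement's English description precedes it below -/
import Mathlib

section
/- Let ψ_q be a Dirichlet character modulo q with q | N | c and ν = ψ_q·ν_η. Write 24m − 23 = α²M₁ with M₁ squarefree. Then |S(m,n,c,ν)| ≪ q^{3/2} σ₀(gcd(α,c)) σ₀(c) √c · gcd((24m−23)(24n−23), c)^{1/2}. -/
/-!
Write `c = q k`. Fourier inversion on `ZMod q` gives `ψ̄(d) = q⁻¹ ∑ⱼ ψ̂(j) e(jd/q)`, and since
`e(jd/q) = e(jkd/c)` the extra phase is absorbed by replacing `n` with `n + jk`; hence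
`S(m,n,c,ψν_η) = q⁻¹ ∑ⱼ ψ̂(j) S(m,n+jk,c,ν_η)`. Each `|ψ̂(j)| ≤ q`, and the shift `n ↦ n + jk`
enlarges `gcd(M₁(24n−23), c)` by at most a factor `q`, so the Weil bound for `ν_η` yields the
claim with an extra factor `q · √q`.
-/

open scoped Classical

/-- `e(r) = exp(2πir)`. -/
noncomputable def eR (r : ℝ) : ℂ := Complex.exp (2 * Real.pi * Complex.I * r)

/-- The sawtooth function `((x)) = x − ⌊x⌋ − 1/2` for `x ∉ ℤ`, and `0` for `x ∈ ℤ`. -/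
noncomputable def sawtooth (x : ℝ) : ℝ :=
  if ∃ k : ℤ, x = k then 0 else Int.fract x - 1/2

/-- The Dedekind sum `s(d,c) = Σ_{r mod c} ((r/c))·((dr/c))`. -/
noncomputable def dedekindSum (d : ℤ) (c : ℕ) : ℝ :=
  ∑ r ∈ Finset.range c, sawtooth ((r : ℝ) / c) * sawtooth ((d : ℝ) * r / c)

/-- The eta multiplier for a matrix `[[a,b],[c,d]]` with `c > 0`:
`ν_η(γ) = e(−1/8)·e^{−πi·s(d,c)}·e((a+d)/(24c))`. -/
noncomputable def etaMult (a d : ℤ) (c : ℕ) : ℂ :=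
  eR (-(1/8)) * Complex.exp (-(Real.pi) * Complex.I * dedekindSum d c) *
    eR (((a : ℝ) + d) / (24 * c))

/-- A generalized Kloosterman sum
`S(m,n,c,ν) = Σ_{0≤a,d<c, ad≡1 (c)} ν̄(a,d,c)·e(((m−α)a + (n−α)d)/c)`,
where the multiplier is given as a function of the entries `a, d, c`. -/
noncomputable def SgenR (ν : ℤ → ℤ → ℕ → ℂ) (α : ℝ) (m n : ℤ) (c : ℕ) : ℂ :=
  ∑ a ∈ Finset.range c, ∑ d ∈ Finset.range c,
    if (c : ℤ) ∣ ((a : ℤ) * d - 1) then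
      (starRingEnd ℂ) (ν a d c) * eR ((((m : ℝ) - α) * a + ((n : ℝ) - α) * d) / c)
    else 0

open scoped ZMod ComplexConjugate

lemma eR_add (x y : ℝ) : eR (x + y) = eR x * eR y := by
  simp only [eR, ← Complex.exp_add]
  push_cast
  ring_nf

lemma stdAddChar_intCast_eq_eR {q : ℕ} [NeZero q] (j : ℤ) :
    ZMod.stdAddChar (j : ZMod q) = eR (j / q) := by
  rw [ZMod.stdAddChar_coe, eR]
  push_cast
  ring_nf

lemma apply_eq_inv_mul_sum_dft_mul_eR {q : ℕ} [NeZero q] (Φ : ZMod q → ℂ) (d : ℤ) :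
    Φ d = (q : ℂ)⁻¹ * ∑ j : ZMod q, 𝓕 Φ j * eR (j.val * d / q) := by
  conv_lhs => rw [← ZMod.dft.symm_apply_apply Φ]
  rw [ZMod.invDFT_apply, smul_eq_mul]
  congr 1
  refine Finset.sum_congr rfl fun j _ => ?_
  have hcast : (j.val : ℝ) * d = ((j.val * d : ℤ) : ℝ) := by push_cast; ring
  rw [smul_eq_mul, mul_comm, hcast, ← stdAddChar_intCast_eq_eR]
  push_cast
  rw [ZMod.natCast_zmod_val]

lemma norm_dft_le {q : ℕ} [NeZero q] {Φ : ZMod q → ℂ} {B : ℝ} (hΦ : ∀ x, ‖Φ x‖ ≤ B)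
    (k : ZMod q) : ‖𝓕 Φ k‖ ≤ q * B := by
  rw [ZMod.dft_apply]
  refine (norm_sum_le _ _).trans ?_
  calc ∑ j, ‖ZMod.stdAddChar (-(j * k)) • Φ j‖ ≤ ∑ _j : ZMod q, B :=
        Finset.sum_le_sum fun j _ => by
          rw [norm_smul, ZMod.stdAddChar_apply, Circle.norm_coe, one_mul]
          exact hΦ j
    _ = q * B := by simp [ZMod.card]

lemma norm_inv_mul_sum_le {q : ℕ} [NeZero q] {F S : ZMod q → ℂ} {B : ℝ}
    (hF : ∀ j, ‖F j‖ ≤ q) (hS : ∀ j, ‖S j‖ ≤ B) :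
    ‖(q : ℂ)⁻¹ * ∑ j, F j * S j‖ ≤ q * B := by
  have hq : (q : ℝ) ≠ 0 := NeZero.ne _
  rw [norm_mul, norm_inv, Complex.norm_natCast]
  calc (q : ℝ)⁻¹ * ‖∑ j, F j * S j‖ ≤ (q : ℝ)⁻¹ * ∑ _j : ZMod q, q * B := by
        gcongr
        refine (norm_sum_le _ _).trans (Finset.sum_le_sum fun j _ => ?_)
        rw [norm_mul]
        exact mul_le_mul (hF j) (hS j) (norm_nonneg _) (Nat.cast_nonneg _)
    _ = q * B := by
        rw [Finset.sum_const, Finset.card_univ, ZMod.card, nsmul_eq_mul]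
        field_simp

lemma SgenR_mul_left_eq_sum_dft {q k : ℕ} [NeZero q] (hk : k ≠ 0) (χ : ZMod q → ℂ)
    (ν : ℤ → ℤ → ℕ → ℂ) (α : ℝ) (m n : ℤ) :
    SgenR (fun a d c => χ d * ν a d c) α m n (q * k) =
      (q : ℂ)⁻¹ * ∑ j : ZMod q, 𝓕 (conj ∘ χ) j * SgenR ν α m (n + j.val * k) (q * k) := by
  have hshift : ∀ (a d : ℕ) (j : ZMod q),
      eR ((((m : ℝ) - α) * a + ((n : ℝ) - α) * d) / (q * k : ℕ)) * eR (j.val * (d : ℤ) / q) =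
        eR ((((m : ℝ) - α) * a + (((n + j.val * k : ℤ) : ℝ) - α) * d) / (q * k : ℕ)) := by
    intro a d j
    have : (q : ℝ) ≠ 0 := NeZero.ne _
    have : (k : ℝ) ≠ 0 := by exact_mod_cast hk
    rw [← eR_add]
    congr 1
    push_cast
    field_simp
    ring
  simp only [SgenR, Finset.mul_sum]
  conv_rhs => rw [Finset.sum_comm]
  refine Finset.sum_congr rfl fun a _ => ?_
  conv_rhs => rw [Finset.sum_comm]
  refine Finset.sum_congr rfl fun d _ => ?_
  split_ifs
  · rw [map_mul, ← Function.comp_apply (f := conj), apply_eq_inv_mul_sum_dft_mul_eR (conj ∘ χ),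
      Finset.mul_sum, Finset.sum_mul, Finset.sum_mul]
    refine Finset.sum_congr rfl fun j _ => ?_
    rw [← hshift]
    ring
  · simp

lemma Int.gcd_add_mul_dvd_mul_gcd (x t : ℤ) (q k : ℕ) :
    Int.gcd (x + t * k) (q * k : ℕ) ∣ q * Int.gcd x (q * k : ℕ) := by
  have h₁ := Int.gcd_dvd_left (x + t * k) (q * k : ℕ)
  have h₂ := Int.gcd_dvd_right (x + t * k) (q * k : ℕ)
  have hqx : (Int.gcd (x + t * k) (q * k : ℕ) : ℤ) ∣ q * x := by
    have : (q : ℤ) * x = q * (x + t * k) - t * (q * k : ℕ) := by push_cast; ring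
    rw [this]
    exact dvd_sub (h₁.mul_left _) (h₂.mul_left _)
  have := Int.dvd_coe_gcd hqx (h₂.mul_left q)
  rw [Int.gcd_mul_left, Int.natAbs_natCast] at this
  exact_mod_cast this

lemma gcd_shifted_le_mul_gcd {q k : ℕ} (hq : 0 < q) (hk : 0 < k) {m n α M₁ : ℤ}
    (h : 24 * m - 23 = α ^ 2 * M₁) (j : ℕ) :
    Int.gcd (M₁ * (24 * (n + j * k) - 23)) (q * k : ℕ) ≤
      q * Int.gcd ((24 * m - 23) * (24 * n - 23)) (q * k : ℕ) := by
  have hsplit : M₁ * (24 * (n + j * k) - 23) = M₁ * (24 * n - 23) + 24 * M₁ * j * k := by ring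
  have hprod : (24 * m - 23) * (24 * n - 23) = α ^ 2 * (M₁ * (24 * n - 23)) := by rw [h]; ring
  refine Nat.le_of_dvd (Nat.mul_pos hq (Int.gcd_pos_of_ne_zero_right _ (by positivity))) ?_
  rw [hsplit, hprod]
  exact (Int.gcd_add_mul_dvd_mul_gcd _ _ q k).trans
    (Nat.mul_dvd_mul_left q (Int.gcd_dvd_gcd_mul_left_left _ _ _))

/-- let `ψ_q` be a Dirichlet character mod `q` with `q | N | c` and
`ν = ψ_q·ν_η` (here `α_ν = α_{ν_η} = 23/24`, so `ñ = n − 23/24`).  Write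
`24m − 23 = α²M₁` with `M₁` squarefree.  Assuming the Weil-type bound of
Ahlgren–Andersen for `S(m,n,c,ν_η)` (with constant `C₀`), one has
`|S(m,n,c,ν)| ≪ q^{3/2}·σ₀(gcd(α,c))·σ₀(c)·√c·gcd((24m−23)(24n−23), c)^{1/2}`,
with implied constant depending only on `C₀`. -/
theorem stmt_7 (C₀ : ℝ) (hC₀ : 0 < C₀)
    (hEta : ∀ (m' n' : ℤ) (c' : ℕ) (α' M₁' : ℤ), 0 < c' →
      24 * m' - 23 = α' ^ 2 * M₁' → Squarefree M₁' →
      ‖SgenR (fun a d c'' => etaMult a d c'') (23/24) m' n' c'‖ ≤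
        C₀ * ((Int.gcd α' c').divisors.card : ℝ) * (c'.divisors.card : ℝ) *
          Real.sqrt c' * Real.sqrt (Int.gcd (M₁' * (24 * n' - 23)) c')) :
    ∃ C : ℝ, 0 < C ∧ ∀ (N q : ℕ) (ψ : DirichletCharacter ℂ q) (m n α M₁ : ℤ) (c : ℕ),
      0 < q → q ∣ N → 0 < N → N ∣ c → 0 < c →
      24 * m - 23 = α ^ 2 * M₁ → Squarefree M₁ →
      ‖SgenR (fun a d c'' => ψ ((d : ZMod q)) * etaMult a d c'') (23/24) m n c‖ ≤
        C * (q : ℝ) ^ ((3:ℝ)/2) * ((Int.gcd α c).divisors.card : ℝ) *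
          (c.divisors.card : ℝ) * Real.sqrt c *
          Real.sqrt (Int.gcd ((24 * m - 23) * (24 * n - 23)) c) := by
  refine ⟨C₀, hC₀, fun N q ψ m n α M₁ c hq hqN _ hNc hc h24 hsf => ?_⟩
  obtain ⟨k, rfl⟩ := hqN.trans hNc
  have hk : 0 < k := Nat.pos_of_mul_pos_left hc
  have : NeZero q := ⟨hq.ne'⟩
  have hS : ∀ j : ZMod q,
      ‖SgenR (fun a d c'' => etaMult a d c'') (23/24) m (n + j.val * k) (q * k)‖ ≤
        C₀ * ((Int.gcd α (q * k : ℕ)).divisors.card : ℝ) * ((q * k).divisors.card : ℝ) *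
          Real.sqrt (q * k : ℕ) *
          (Real.sqrt q * Real.sqrt (Int.gcd ((24 * m - 23) * (24 * n - 23)) (q * k : ℕ))) := by
    intro j
    refine (hEta _ _ _ α M₁ hc h24 hsf).trans ?_
    rw [← Real.sqrt_mul (Nat.cast_nonneg q)]
    gcongr
    exact_mod_cast gcd_shifted_le_mul_gcd hq hk h24 j.val
  have hF : ∀ j, ‖𝓕 (conj ∘ ψ) j‖ ≤ q := by
    simpa using norm_dft_le (Φ := conj ∘ ψ) (B := 1) fun x => by simpa using ψ.norm_le_one x
  rw [SgenR_mul_left_eq_sum_dft hk.ne' ψ (fun a d c'' => etaMult a d c'')]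
  refine (norm_inv_mul_sum_le hF hS).trans (le_of_eq ?_)
  rw [show ((3 : ℝ) / 2) = 1 + 1 / 2 by norm_num, Real.rpow_add (by positivity), Real.rpow_one,
    ← Real.sqrt_eq_rpow]
  ring
end

section
/- For real r with 0 ≤ r < 1 and the same test function φ, the transform φ̌(r) = cosh(πr)∫₀^∞ K_{2ir}(u)φ(u) du/u satisfies φ̌(r) ≪_ε (ax)^ε, provided a is bounded below by a positive constant. -/
open MeasureTheory

/-- The modified Bessel function of the second kind of purely imaginary order `ir`
(`r` real), via the integral representation
`K_{ir}(u) = ∫₀^∞ e^{−u·cosh w}·cos(r·w) dw`. -/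
noncomputable def besselKI (r u : ℝ) : ℝ :=
  ∫ w in Set.Ioi (0:ℝ), Real.exp (-u * Real.cosh w) * Real.cos (r * w)

/-- `e^{-s} ≤ C·s^{-ε}` for all `s > 0`, with `C = N^N`, `N = ⌈ε⌉`. -/
lemma exp_neg_le_rpow_aux {ε : ℝ} (hε : 0 < ε) :
    ∃ Cε : ℝ, 1 ≤ Cε ∧ ∀ s : ℝ, 0 < s → Real.exp (-s) ≤ Cε * s ^ (-ε) := by
  set N : ℕ := ⌈ε⌉₊ with hN
  have hN1 : 1 ≤ N := Nat.one_le_ceil_iff.mpr hε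
  have hNε : ε ≤ (N : ℝ) := Nat.le_ceil ε
  have hNpos : (0:ℝ) < N := by positivity
  refine ⟨(N:ℝ)^N, one_le_pow₀ (by exact_mod_cast hN1), fun s hs => ?_⟩
  rcases le_or_gt 1 s with h1 | h1
  · have key : Real.exp (-s) ≤ (N:ℝ)^N * (s^N)⁻¹ := by
      have h1' : Real.exp (-(s/N)) ≤ (N:ℝ)/s := by
        have hq : (0:ℝ) < s / N := by positivity
        have hle : s / N ≤ Real.exp (s/N) := by nlinarith [Real.add_one_le_exp (s/N)]
        have := inv_anti₀ hq hle
        rw [Real.exp_neg]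
        calc (Real.exp (s/N))⁻¹ ≤ (s/N)⁻¹ := this
          _ = (N:ℝ)/s := by rw [inv_div]
      have hsplit : Real.exp (-s) = (Real.exp (-(s/N)))^N := by
        rw [← Real.exp_nat_mul]
        congr 1
        field_simp
      rw [hsplit]
      calc (Real.exp (-(s/N)))^N ≤ ((N:ℝ)/s)^N :=
            pow_le_pow_left₀ (Real.exp_pos _).le h1' N
        _ = (N:ℝ)^N * (s^N)⁻¹ := by rw [div_pow]; ring
    refine key.trans ?_
    have h3 : (s^N : ℝ)⁻¹ = s ^ (-(N:ℝ)) := by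
      rw [← Real.rpow_natCast s N, ← Real.rpow_neg hs.le]
    rw [h3]
    have h4 : s ^ (-(N:ℝ)) ≤ s ^ (-ε) :=
      Real.rpow_le_rpow_of_exponent_le h1 (by linarith)
    nlinarith [pow_pos hNpos N, Real.rpow_nonneg hs.le (-ε)]
  · have h2 : (1:ℝ) ≤ s ^ (-ε) :=
      Real.one_le_rpow_of_pos_of_le_one_of_nonpos hs h1.le (by linarith)
    have h3 : Real.exp (-s) ≤ 1 := Real.exp_le_one_iff.mpr (by linarith)
    nlinarith [one_le_pow₀ (show (1:ℝ) ≤ (N:ℝ) by exact_mod_cast hN1) (n := N)]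

/-- The Bessel-type integral is bounded by `Cε·2^ε/ε · u^{-ε}` for `u > 0`. -/
lemma besselKI_bound_aux {ε Cε : ℝ} (hε : 0 < ε) (hCε : 1 ≤ Cε)
    (hexp : ∀ s : ℝ, 0 < s → Real.exp (-s) ≤ Cε * s ^ (-ε))
    (r u : ℝ) (hu : 0 < u) :
    |besselKI r u| ≤ (Cε * 2^ε / ε) * u ^ (-ε) := by
  have hint : Integrable (fun w : ℝ => (Cε * 2^ε * u ^ (-ε)) * Real.exp (-ε * w))
      (volume.restrict (Set.Ioi (0:ℝ))) :=
    ((exp_neg_integrableOn_Ioi 0 hε).const_mul _)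
  have hbound : ∀ w ∈ Set.Ioi (0:ℝ),
      ‖Real.exp (-u * Real.cosh w) * Real.cos (r * w)‖ ≤
        (Cε * 2^ε * u ^ (-ε)) * Real.exp (-ε * w) := by
    intro w _
    have hcosh : Real.exp w / 2 ≤ Real.cosh w := by
      rw [Real.cosh_eq]
      have := Real.exp_pos (-w)
      linarith
    have h1 : ‖Real.exp (-u * Real.cosh w) * Real.cos (r * w)‖ ≤
        Real.exp (-(u * Real.exp w / 2)) := by
      rw [norm_mul, Real.norm_eq_abs, Real.norm_eq_abs, abs_of_pos (Real.exp_pos _)]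
      calc Real.exp (-u * Real.cosh w) * |Real.cos (r * w)|
          ≤ Real.exp (-u * Real.cosh w) * 1 :=
            mul_le_mul_of_nonneg_left (Real.abs_cos_le_one _) (Real.exp_pos _).le
        _ = Real.exp (-u * Real.cosh w) := mul_one _
        _ ≤ Real.exp (-(u * Real.exp w / 2)) := by
            apply Real.exp_le_exp.mpr
            have : u * (Real.exp w / 2) ≤ u * Real.cosh w :=
              mul_le_mul_of_nonneg_left hcosh hu.le
            nlinarith
    refine h1.trans ?_
    have hspos : 0 < u * Real.exp w / 2 := by positivity
    refine (hexp _ hspos).trans (le_of_eq ?_)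
    have hrw : (u * Real.exp w / 2 : ℝ) ^ (-ε) = u ^ (-ε) * (2:ℝ)^ε * Real.exp (-ε * w) := by
      have e1 : (u * Real.exp w / 2 : ℝ) = u * (Real.exp w * (2:ℝ)⁻¹) := by ring
      rw [e1, Real.mul_rpow hu.le (by positivity),
        Real.mul_rpow (Real.exp_pos w).le (by norm_num),
        Real.inv_rpow (by norm_num : (0:ℝ) ≤ 2), ← Real.rpow_neg (by norm_num : (0:ℝ) ≤ 2),
        neg_neg, ← Real.exp_mul]
      ring_nf
    rw [hrw]; ring
  have key := MeasureTheory.norm_integral_le_of_norm_le hint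
    ((ae_restrict_iff' measurableSet_Ioi).mpr (Filter.Eventually.of_forall hbound))
  rw [Real.norm_eq_abs] at key
  refine key.trans ?_
  rw [MeasureTheory.integral_const_mul]
  have hι : (∫ w in Set.Ioi (0:ℝ), Real.exp (-ε * w)) = ε⁻¹ := by
    have h2 := integral_comp_mul_left_Ioi (fun x => Real.exp (-x)) 0 hε
    simp only [mul_zero, smul_eq_mul] at h2
    rw [integral_exp_neg_Ioi_zero] at h2
    simp only [neg_mul]
    rw [h2]; ring
  rw [hι]
  exact le_of_eq (by ring)

set_option maxHeartbeats 1000000 in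
/-- for real `0 ≤ r < 1` and the test function `φ` (C⁴, supported in
`[a/(2x+2T), a/(x−T)]`, equal to `1` on `[a/(2x), a/x]`, `φ' ≪ x²/(aT)`, taking
values in `[0,1]`), the transform `φ̌(r) = cosh(πr)·∫₀^∞ K_{2ir}(u)·φ(u)·du/u`
satisfies `φ̌(r) ≪_ε (ax)^ε`, provided `a` is bounded below by a positive constant. -/
theorem stmt_11 (ε a₀ C₁ : ℝ) (hε : 0 < ε) (ha₀ : 0 < a₀) (hC₁ : 0 < C₁) :
    ∃ C : ℝ, 0 < C ∧ ∀ (a x T r : ℝ) (φ : ℝ → ℝ),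
      a₀ ≤ a → 0 < T → T ≤ x / 3 →
      0 ≤ r → r < 1 →
      ContDiff ℝ 4 φ →
      (∀ u : ℝ, u ∉ Set.Icc (a/(2*x+2*T)) (a/(x-T)) → φ u = 0) →
      (∀ u ∈ Set.Icc (a/(2*x)) (a/x), φ u = 1) →
      (∀ u : ℝ, |deriv φ u| ≤ C₁ * x^2 / (a*T)) →
      (∀ u : ℝ, 0 ≤ φ u ∧ φ u ≤ 1) →
      |Real.cosh (Real.pi * r) * ∫ u in Set.Ioi (0:ℝ), besselKI (2*r) u * φ u / u| ≤
        C * (a*x) ^ ε := by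
  obtain ⟨Cε, hCε, hexp⟩ := exp_neg_le_rpow_aux hε
  set D : ℝ := Cε * 2^ε / ε with hD
  have hDpos : 0 < D := by
    have : (0:ℝ) < 2^ε := Real.rpow_pos_of_pos (by norm_num) ε
    positivity
  set E : ℝ := (8 / (3 * a₀^2)) ^ ε with hE
  have hEpos : 0 < E := Real.rpow_pos_of_pos (by positivity) ε
  refine ⟨Real.cosh Real.pi * (3 * D * E), by positivity, ?_⟩
  intro a x T r φ haa hT hTx hr hr1 _ hsupp _ _ hφ01
  have ha : 0 < a := lt_of_lt_of_le ha₀ haa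
  have hx : 0 < x := by linarith
  have hd1 : 0 < 2*x + 2*T := by linarith
  have hd2 : 0 < x - T := by linarith
  set L : ℝ := a / (2*x + 2*T) with hLdef
  set U : ℝ := a / (x - T) with hUdef
  have hL : 0 < L := by positivity
  have hU : 0 < U := by positivity
  have hLU : L ≤ U := by
    apply div_le_div_of_nonneg_left ha.le hd2
    linarith
  have hU4 : U ≤ 4 * L := by
    rw [hUdef, hLdef, div_le_iff₀ hd2]
    have h4 : 4 * (a / (2*x+2*T)) = (4*a) / (2*x+2*T) := by ring
    rw [h4, div_mul_eq_mul_div, le_div_iff₀ hd1]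
    nlinarith
  -- the pointwise bound constant on the support
  set M : ℝ := D * L ^ (-ε) / L with hM
  have hMpos : 0 < M := by
    have := Real.rpow_pos_of_pos hL (-ε)
    positivity
  -- bound on the outer integral
  have hG : Integrable ((Set.Icc L U).indicator (fun _ => M))
      (volume.restrict (Set.Ioi (0:ℝ))) := by
    refine IntegrableOn.integrable_indicator ?_ measurableSet_Icc
    refine (integrableOn_const_iff (C := M)).mpr (Or.inr ?_)
    rw [Measure.restrict_apply measurableSet_Icc]
    exact lt_of_le_of_lt (measure_mono Set.inter_subset_left) measure_Icc_lt_top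
  have hptwise : ∀ u ∈ Set.Ioi (0:ℝ),
      ‖besselKI (2*r) u * φ u / u‖ ≤ (Set.Icc L U).indicator (fun _ => M) u := by
    intro u hu
    rcases Classical.em (u ∈ Set.Icc L U) with hmem | hmem
    · rw [Set.indicator_of_mem hmem]
      obtain ⟨huL, huU⟩ := hmem
      have hupos : (0:ℝ) < u := hu
      have hK := besselKI_bound_aux hε hCε hexp (2*r) u hupos
      have hφu : |φ u| ≤ 1 := by
        obtain ⟨h1, h2⟩ := hφ01 u
        rw [abs_of_nonneg h1]; exact h2
      have hrp : u ^ (-ε) ≤ L ^ (-ε) :=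
        Real.rpow_le_rpow_of_nonpos hL huL (by linarith)
      have hui : u⁻¹ ≤ L⁻¹ := by
        apply inv_anti₀ hL huL
      have hBnn : (0:ℝ) ≤ D * u ^ (-ε) := by
        have := Real.rpow_nonneg hupos.le (-ε); positivity
      calc ‖besselKI (2*r) u * φ u / u‖
          = |besselKI (2*r) u| * |φ u| * u⁻¹ := by
            rw [Real.norm_eq_abs, abs_div, abs_mul, abs_of_pos hupos, div_eq_mul_inv]
        _ ≤ (D * u ^ (-ε)) * 1 * u⁻¹ := by
            apply mul_le_mul_of_nonneg_right _ (by positivity)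
            exact mul_le_mul hK hφu (abs_nonneg _) (by positivity)
        _ = (D * u ^ (-ε)) * u⁻¹ := by ring
        _ ≤ (D * L ^ (-ε)) * L⁻¹ := by
            apply mul_le_mul _ hui (by positivity) _
            · exact mul_le_mul_of_nonneg_left hrp hDpos.le
            · have := Real.rpow_nonneg hL.le (-ε); positivity
        _ = M := by rw [hM]; ring
    · rw [Set.indicator_of_notMem hmem, hsupp u hmem]
      simp
  have key := MeasureTheory.norm_integral_le_of_norm_le hG
    ((ae_restrict_iff' measurableSet_Ioi).mpr (Filter.Eventually.of_forall hptwise))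
  rw [Real.norm_eq_abs] at key
  have hGint : (∫ u in Set.Ioi (0:ℝ), (Set.Icc L U).indicator (fun _ => M) u) = (U - L) * M := by
    rw [MeasureTheory.integral_indicator measurableSet_Icc]
    rw [MeasureTheory.setIntegral_const]
    rw [measureReal_def, Measure.restrict_apply measurableSet_Icc]
    have hss : Set.Icc L U ∩ Set.Ioi (0:ℝ) = Set.Icc L U := by
      apply Set.inter_eq_left.mpr
      intro z hz
      exact lt_of_lt_of_le hL hz.1
    rw [hss, Real.volume_Icc, ENNReal.toReal_ofReal (by linarith), smul_eq_mul]
  rw [hGint] at key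
  -- assemble
  have hIb : |∫ u in Set.Ioi (0:ℝ), besselKI (2*r) u * φ u / u| ≤ 3 * D * L ^ (-ε) := by
    refine key.trans ?_
    have h1 : (U - L) * M ≤ (3 * L) * M :=
      mul_le_mul_of_nonneg_right (by linarith) hMpos.le
    refine h1.trans (le_of_eq ?_)
    rw [hM]
    field_simp
  have hcosh : Real.cosh (Real.pi * r) ≤ Real.cosh Real.pi := by
    rw [Real.cosh_le_cosh]
    rw [abs_of_nonneg (by positivity), abs_of_pos Real.pi_pos]
    nlinarith [Real.pi_pos]
  have hcosh0 : 0 < Real.cosh (Real.pi * r) := Real.cosh_pos _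
  have hLrp : L ^ (-ε) ≤ E * (a*x) ^ ε := by
    have h1 : L ^ (-ε) = (L⁻¹) ^ ε := by
      rw [Real.rpow_neg hL.le, ← Real.inv_rpow hL.le]
    have h2 : L⁻¹ ≤ 8 / (3 * a₀^2) * (a*x) := by
      have hL' : L⁻¹ = (2*x+2*T)/a := by rw [hLdef, inv_div]
      rw [hL', div_le_iff₀ ha]
      have e1 : 2*x+2*T ≤ 8*x/3 := by linarith
      have e2 : a₀^2 ≤ a^2 := by nlinarith
      have e3 : 8 / (3 * a₀^2) * (a*x) * a = (8 * a^2 * x) / (3 * a₀^2) := by ring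
      rw [e3, le_div_iff₀ (by positivity)]
      have p1 := mul_le_mul_of_nonneg_right e2 (by positivity : (0:ℝ) ≤ 8*x)
      have p2 := mul_le_mul_of_nonneg_right e1 (by positivity : (0:ℝ) ≤ 3*a₀^2)
      linarith
    have h3 : (L⁻¹) ^ ε ≤ (8 / (3 * a₀^2) * (a*x)) ^ ε :=
      Real.rpow_le_rpow (by positivity) h2 hε.le
    rw [h1]
    refine h3.trans (le_of_eq ?_)
    rw [Real.mul_rpow (by positivity) (by positivity)]
  calc |Real.cosh (Real.pi * r) * ∫ u in Set.Ioi (0:ℝ), besselKI (2*r) u * φ u / u|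
      = Real.cosh (Real.pi * r) * |∫ u in Set.Ioi (0:ℝ), besselKI (2*r) u * φ u / u| := by
        rw [abs_mul, abs_of_pos hcosh0]
    _ ≤ Real.cosh Real.pi * (3 * D * L ^ (-ε)) := by
        apply mul_le_mul hcosh hIb (abs_nonneg _) (le_of_lt (Real.cosh_pos _))
    _ ≤ Real.cosh Real.pi * (3 * D * (E * (a*x) ^ ε)) := by
        apply mul_le_mul_of_nonneg_left _ (le_of_lt (Real.cosh_pos _))
        exact mul_le_mul_of_nonneg_left hLrp (by positivity)
    _ = Real.cosh Real.pi * (3 * D * E) * (a*x) ^ ε := by ring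
end
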